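/- arXiv:0909.1178 — 6 statements merged into one kernel-verified Lean document; each statement's English description precedes it below -/
import Mathlib

section
/- Let q be a prime power. The number δ(2,q;0) of pairs (α₁,α₂) ∈ (F_q*)² with α₁ + α₂ + α₁⁻¹ + α₂⁻¹ = 0 equals 2q - 4 if the characteristic of F_q is odd, and equals 2q - 3 if the characteristic is 2. -/
/-!
For `a, b ≠ 0` one has `a + b + a⁻¹ + b⁻¹ = (a + b) (a b + 1) / (a b)`, so the solutions are
the two "lines" `b = -a` and `b = -a⁻¹`, each with `q - 1` points. They meet where `a⁻¹ = a`,
i.e. at `a = ±1`: two points in odd characteristic, one in characteristic `2`.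
-/

open Finset

section
variable {F : Type*} [Field F]

theorem add_add_inv_add_inv_eq_zero_iff {a b : F} (ha : a ≠ 0) (hb : b ≠ 0) :
    a + b + a⁻¹ + b⁻¹ = 0 ↔ b = -a ∨ b = -a⁻¹ := by
  have hfactor : a + b + a⁻¹ + b⁻¹ = (a + b) * (a * b + 1) / (a * b) := by
    field_simp; ring
  rw [hfactor, div_eq_zero_iff, mul_eq_zero, mul_eq_zero, or_iff_left (not_or.2 ⟨ha, hb⟩)]
  refine or_congr ⟨fun h => by linear_combination h, fun h => by rw [h, add_neg_cancel]⟩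
    ⟨fun h => by field_simp; linear_combination h,
      fun h => by rw [h, mul_neg, mul_inv_cancel₀ ha, neg_add_cancel]⟩

variable [Fintype F] [DecidableEq F]

theorem filter_add_add_inv_add_inv_eq_zero :
    univ.filter (fun p : F × F => p.1 ≠ 0 ∧ p.2 ≠ 0 ∧ p.1 + p.2 + p.1⁻¹ + p.2⁻¹ = 0) =
      ({0}ᶜ : Finset F).image (fun a => (a, -a)) ∪
        ({0}ᶜ : Finset F).image (fun a => (a, -a⁻¹)) := by
  ext ⟨a, b⟩
  simp only [mem_filter, mem_univ, true_and, mem_union, mem_image, mem_compl, mem_singleton,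
    Prod.mk.injEq]
  constructor
  · rintro ⟨ha, hb, h⟩
    rcases (add_add_inv_add_inv_eq_zero_iff ha hb).1 h with rfl | rfl
    · exact Or.inl ⟨a, ha, rfl, rfl⟩
    · exact Or.inr ⟨a, ha, rfl, rfl⟩
  · rintro (⟨a, ha, rfl, rfl⟩ | ⟨a, ha, rfl, rfl⟩)
    · have hb : -a ≠ 0 := neg_ne_zero.2 ha
      exact ⟨ha, hb, (add_add_inv_add_inv_eq_zero_iff ha hb).2 (Or.inl rfl)⟩
    · have hb : -a⁻¹ ≠ 0 := neg_ne_zero.2 (inv_ne_zero ha)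
      exact ⟨ha, hb, (add_add_inv_add_inv_eq_zero_iff ha hb).2 (Or.inr rfl)⟩

theorem image_neg_inter_image_neg_inv :
    ({0}ᶜ : Finset F).image (fun a => (a, -a)) ∩ ({0}ᶜ : Finset F).image (fun a => (a, -a⁻¹)) =
      ({1, -1} : Finset F).image (fun a => (a, -a)) := by
  ext ⟨a, b⟩
  simp only [mem_inter, mem_image, mem_compl, mem_singleton, mem_insert, Prod.mk.injEq]
  constructor
  · rintro ⟨⟨a, -, rfl, rfl⟩, ⟨a, ha, rfl, h⟩⟩
    have hpm : a = 1 ∨ a = -1 := by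
      rcases inv_eq_self₀.1 (neg_injective h) with h' | h' | h' <;> tauto
    exact ⟨a, hpm, rfl, rfl⟩
  · rintro ⟨a, ha, rfl, rfl⟩
    have ha₀ : a ≠ 0 := by rcases ha with rfl | rfl <;> simp
    have hinv : a⁻¹ = a := inv_eq_self₀.2 (by tauto)
    exact ⟨⟨a, ha₀, rfl, rfl⟩, ⟨a, ha₀, rfl, by rw [hinv]⟩⟩

theorem card_solutions_add_card_pair :
    Nat.card {p : F × F // p.1 ≠ 0 ∧ p.2 ≠ 0 ∧ p.1 + p.2 + p.1⁻¹ + p.2⁻¹ = 0} +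
      #({1, -1} : Finset F) = 2 * (Fintype.card F - 1) := by
  have hinj : ∀ f : F → F, Function.Injective (fun a => (a, f a)) :=
    fun f a b h => (Prod.mk.inj h).1
  rw [Nat.card_eq_fintype_card, Fintype.card_subtype, filter_add_add_inv_add_inv_eq_zero,
    ← card_image_of_injective _ (hinj Neg.neg), ← image_neg_inter_image_neg_inv,
    card_union_add_card_inter, card_image_of_injective _ (hinj _),
    card_image_of_injective _ (hinj _), card_compl, card_singleton, two_mul]

end

theorem stmt1 {F : Type*} [Field F] [Fintype F] :
    (ringChar F ≠ 2 →
      Nat.card {p : F × F // p.1 ≠ 0 ∧ p.2 ≠ 0 ∧ p.1 + p.2 + p.1⁻¹ + p.2⁻¹ = 0}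
        = 2 * Fintype.card F - 4) ∧
    (ringChar F = 2 →
      Nat.card {p : F × F // p.1 ≠ 0 ∧ p.2 ≠ 0 ∧ p.1 + p.2 + p.1⁻¹ + p.2⁻¹ = 0}
        = 2 * Fintype.card F - 3) := by
  classical
  have hcount := card_solutions_add_card_pair (F := F)
  have hq : 2 ≤ Fintype.card F := Fintype.one_lt_card
  constructor
  · intro hchar
    rw [card_pair (Ring.neg_one_ne_one_of_char_ne_two hchar).symm] at hcount
    omega
  · intro hchar
    rw [neg_one_eq_one_iff.2 hchar, pair_eq_singleton, card_singleton] at hcount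
    omega
end

section
/- Let q be a prime power, λ the canonical additive character of F_q, and β ∈ F_q. Then δ(2,q;β) ≤ δ(2,q;0), where δ(2,q;β) = |{(α₁,α₂) ∈ (F_q*)² : α₁ + α₂ + α₁⁻¹ + α₂⁻¹ = β}|. Consequently δ(2,q;β) ≤ 2q - 4 if char F_q is odd and δ(2,q;β) ≤ 2q - 3 if char F_q = 2. -/
/-!
Write `N c` for the number of `a ≠ 0` with `a + a⁻¹ = c`; these are the roots of `X² - cX + 1`,
so `N c ≤ 2`. Splitting the equation as `(α₁ + α₁⁻¹) + (α₂ + α₂⁻¹) = β` gives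
`δ(β) = ∑_c N(c) N(β - c)`, which by Cauchy–Schwarz is at most `∑_c N(c)² = δ(0)`
(using `N(-c) = N(c)`). Since `N c ∈ {0, 1, 2}`, `∑ N(c)² = 2 ∑ N(c) - #{c | N c = 1}`, where
`∑ N(c) = q - 1` and `N(±2) = 1`, because `a + a⁻¹ = ±2` forces `(a ∓ 1)² = 0`. The values
`2` and `-2` are distinct exactly when the characteristic is odd.
-/

open Finset

lemma Finset.sum_mul_apply_sub_le_sum_sq {G : Type*} [AddCommGroup G] [Fintype G]
    (f : G → ℕ) (β : G) : ∑ c, f c * f (β - c) ≤ ∑ c, f c ^ 2 := by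
  have hshift : ∑ c, f (β - c) ^ 2 = ∑ c, f c ^ 2 :=
    Fintype.sum_equiv (Equiv.subLeft β) _ _ fun _ => rfl
  have hcs := sum_mul_sq_le_sq_mul_sq univ f fun c => f (β - c)
  rw [hshift, ← sq] at hcs
  exact (Nat.pow_le_pow_iff_left two_ne_zero).mp hcs

lemma Finset.sum_sq_add_card_eq_one {ι : Type*} (s : Finset ι) (f : ι → ℕ)
    (hf : ∀ i ∈ s, f i ≤ 2) : ∑ i ∈ s, f i ^ 2 + #{i ∈ s | f i = 1} = 2 * ∑ i ∈ s, f i := by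
  rw [card_filter, ← sum_add_distrib, mul_sum]
  refine sum_congr rfl fun i hi => ?_
  have := hf i hi
  interval_cases f i <;> rfl

section RecipFiber

variable {F : Type*} [Field F] [Fintype F] [DecidableEq F]

def recipFiber (c : F) : Finset F := {a | a ≠ 0 ∧ a + a⁻¹ = c}

@[simp]
lemma mem_recipFiber {c a : F} : a ∈ recipFiber c ↔ a ≠ 0 ∧ a + a⁻¹ = c := by
  simp [recipFiber]

lemma eq_or_eq_inv_of_mem_recipFiber {c a b : F} (ha : a ∈ recipFiber c)
    (hb : b ∈ recipFiber c) : b = a ∨ b = a⁻¹ := by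
  obtain ⟨ha0, hac⟩ := mem_recipFiber.mp ha
  obtain ⟨hb0, hbc⟩ := mem_recipFiber.mp hb
  have hfactor : (b - a) * (b - a⁻¹) = 0 := by
    linear_combination b * hbc - b * hac - mul_inv_cancel₀ hb0 + mul_inv_cancel₀ ha0
  rcases mul_eq_zero.mp hfactor with h | h
  · exact .inl (sub_eq_zero.mp h)
  · exact .inr (sub_eq_zero.mp h)

lemma card_recipFiber_le_two (c : F) : #(recipFiber c) ≤ 2 := by
  obtain h | ⟨a, ha⟩ := (recipFiber c).eq_empty_or_nonempty
  · simp [h]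
  · calc #(recipFiber c) ≤ #{a, a⁻¹} := card_le_card fun b hb => by
          simpa using eq_or_eq_inv_of_mem_recipFiber ha hb
      _ ≤ 2 := card_le_two

lemma recipFiber_neg (c : F) : recipFiber (-c) = (recipFiber c).map (Equiv.neg F).toEmbedding := by
  ext a
  simp only [mem_recipFiber, mem_map_equiv, Equiv.neg_symm, Equiv.neg_apply, inv_neg]
  constructor <;> rintro ⟨h0, h⟩ <;> exact ⟨by simpa using h0, by linear_combination -h⟩

lemma card_recipFiber_neg (c : F) : #(recipFiber (-c)) = #(recipFiber c) := by
  rw [recipFiber_neg, card_map]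

lemma recipFiber_two : recipFiber (2 : F) = {1} := by
  ext a
  rw [mem_recipFiber, mem_singleton]
  constructor
  · rintro ⟨h0, h⟩
    have hsq : (a - 1) ^ 2 = 0 := by linear_combination a * h - mul_inv_cancel₀ h0
    exact sub_eq_zero.mp (pow_eq_zero_iff two_ne_zero |>.mp hsq)
  · rintro rfl
    norm_num

lemma recipFiber_neg_two : recipFiber (-2 : F) = {-1} := by
  rw [recipFiber_neg, recipFiber_two, map_singleton]
  rfl

lemma sum_card_recipFiber : ∑ c : F, #(recipFiber c) = Fintype.card F - 1 := by
  have hfib := card_eq_sum_card_fiberwise (s := {a : F | a ≠ 0}) (t := univ)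
    (f := fun a => a + a⁻¹) fun _ _ => mem_univ _
  rw [filter_ne', card_erase_of_mem (mem_univ _), card_univ] at hfib
  rw [hfib]
  refine sum_congr rfl fun c _ => congrArg card ?_
  ext a
  simp [and_comm]

lemma card_recipFiber_eq_one_of_mem {c : F} (hc : c ∈ ({2, -2} : Finset F)) :
    #(recipFiber c) = 1 := by
  rcases mem_insert.mp hc with rfl | hc
  · rw [recipFiber_two, card_singleton]
  · rw [mem_singleton.mp hc, recipFiber_neg_two, card_singleton]

end RecipFiber

section RecipSumCount

variable {F : Type*} [Field F]

noncomputable def recipSumCount (β : F) : ℕ :=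
  Nat.card {p : F × F // p.1 ≠ 0 ∧ p.2 ≠ 0 ∧ p.1 + p.2 + p.1⁻¹ + p.2⁻¹ = β}

variable [Fintype F] [DecidableEq F]

lemma recipSumCount_eq_sum (β : F) :
    recipSumCount β = ∑ c : F, #(recipFiber c) * #(recipFiber (β - c)) := by
  rw [recipSumCount, Nat.card_eq_fintype_card, Fintype.card_subtype,
    card_eq_sum_card_fiberwise (f := fun p : F × F => p.1 + p.1⁻¹) (t := univ)
      fun _ _ => mem_univ _]
  refine sum_congr rfl fun c _ => ?_
  rw [← card_product]
  congr 1
  ext ⟨a, b⟩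
  simp only [mem_filter, mem_univ, true_and, mem_product, mem_recipFiber]
  constructor
  · rintro ⟨⟨ha, hb, h⟩, hc⟩
    exact ⟨⟨ha, hc⟩, hb, by linear_combination h - hc⟩
  · rintro ⟨⟨ha, hc⟩, hb, h⟩
    exact ⟨⟨ha, hb, by linear_combination hc + h⟩, hc⟩

lemma recipSumCount_zero : recipSumCount (0 : F) = ∑ c : F, #(recipFiber c) ^ 2 := by
  rw [recipSumCount_eq_sum]
  refine sum_congr rfl fun c _ => ?_
  rw [zero_sub, card_recipFiber_neg, sq]

lemma recipSumCount_le_recipSumCount_zero (β : F) : recipSumCount β ≤ recipSumCount (0 : F) := by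
  rw [recipSumCount_eq_sum, recipSumCount_zero]
  exact sum_mul_apply_sub_le_sum_sq _ β

lemma recipSumCount_zero_add_card_le :
    recipSumCount (0 : F) + #({2, -2} : Finset F) ≤ 2 * (Fintype.card F - 1) := by
  have hsq := sum_sq_add_card_eq_one univ (fun c : F => #(recipFiber c))
    fun c _ => card_recipFiber_le_two c
  have hsub : ({2, -2} : Finset F) ⊆ ({c | #(recipFiber c) = 1} : Finset F) := fun c hc => by
    simpa using card_recipFiber_eq_one_of_mem hc
  rw [sum_card_recipFiber] at hsq
  rw [recipSumCount_zero]
  linarith [card_le_card hsub]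

end RecipSumCount

theorem stmt3 {F : Type*} [Field F] [Fintype F] (β : F) :
    Nat.card {p : F × F // p.1 ≠ 0 ∧ p.2 ≠ 0 ∧ p.1 + p.2 + p.1⁻¹ + p.2⁻¹ = β}
      ≤ Nat.card {p : F × F // p.1 ≠ 0 ∧ p.2 ≠ 0 ∧ p.1 + p.2 + p.1⁻¹ + p.2⁻¹ = 0} ∧
    (ringChar F ≠ 2 →
      Nat.card {p : F × F // p.1 ≠ 0 ∧ p.2 ≠ 0 ∧ p.1 + p.2 + p.1⁻¹ + p.2⁻¹ = β}
        ≤ 2 * Fintype.card F - 4) ∧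
    (ringChar F = 2 →
      Nat.card {p : F × F // p.1 ≠ 0 ∧ p.2 ≠ 0 ∧ p.1 + p.2 + p.1⁻¹ + p.2⁻¹ = β}
        ≤ 2 * Fintype.card F - 3) := by
  classical
  change recipSumCount β ≤ recipSumCount 0 ∧ (_ → recipSumCount β ≤ _) ∧ (_ → recipSumCount β ≤ _)
  have hle := recipSumCount_le_recipSumCount_zero β
  have hbound := recipSumCount_zero_add_card_le (F := F)
  have hq : 2 ≤ Fintype.card F := Fintype.one_lt_card
  refine ⟨hle, fun hchar => ?_, fun _ => ?_⟩
  · have htwo : (2 : F) ≠ -2 := fun h => Ring.two_ne_zero hchar <| by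
      simpa using (by linear_combination h : (2 : F) * 2 = 0)
    rw [card_pair htwo] at hbound
    omega
  · have := card_pos.mpr (insert_nonempty (2 : F) {-2})
    omega
end

section
/- Let q be a prime power, λ the canonical additive character of F_q, m ≥ 0 an integer, and β ∈ F_q. Then Σ_{a ∈ F_q*} λ(-aβ) K(λ;a²)^m = q·δ(m,q;β) - (q-1)^m. -/
/-!
Substituting `α = a γ` turns `K(λ; a²)` into `∑_{γ ≠ 0} λ(a (γ + γ⁻¹))`, so the `m`-th power becomes
`∑_v λ(a ∑_i (v_i + v_i⁻¹))` over `v ∈ (F_q^*)^m`. After swapping the sums, orthogonality of `λ`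
over the nonzero `a` contributes `q - 1` for each `v` with `∑_i (v_i + v_i⁻¹) = β` and `-1` otherwise.
-/

open Finset

lemma AddChar.map_sum_eq_prod {A M ι : Type*} [AddCommMonoid A] [CommMonoid M]
    (ψ : AddChar A M) (s : Finset ι) (f : ι → A) : ψ (∑ i ∈ s, f i) = ∏ i ∈ s, ψ (f i) := by
  induction s using Finset.cons_induction with
  | empty => simp
  | cons a s _ ih => rw [sum_cons, prod_cons, ψ.map_add_eq_mul, ih]

lemma AddChar.sum_pow_eq_sum_piFinset {A R ι : Type*} [AddCommMonoid A] [CommSemiring R]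
    (ψ : AddChar A R) (s : Finset ι) (g : ι → A) (m : ℕ) :
    (∑ γ ∈ s, ψ (g γ)) ^ m = ∑ v ∈ Fintype.piFinset (fun _ : Fin m => s), ψ (∑ i, g (v i)) := by
  simp only [sum_pow', ψ.map_sum_eq_prod]

lemma AddChar.sum_nonzero_mul_eq_ite {F R : Type*} [Field F] [Fintype F] [DecidableEq F]
    [CommRing R] [IsDomain R] {ψ : AddChar F R} (hψ : ψ ≠ 1) (x : F) :
    ∑ a ∈ univ.filter (fun a : F => a ≠ 0), ψ (a * x)
      = (if x = 0 then (Fintype.card F : R) else 0) - 1 := by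
  rw [filter_ne', sum_erase_eq_sub (mem_univ 0), AddChar.sum_mulShift x (.of_ne_one hψ)]
  simp

lemma sum_nonzero_add_sq_mul_inv {F M : Type*} [Field F] [Fintype F] [DecidableEq F]
    [AddCommMonoid M] (f : F → M) {a : F} (ha : a ≠ 0) :
    ∑ α ∈ univ.filter (fun α : F => α ≠ 0), f (α + a ^ 2 * α⁻¹)
      = ∑ γ ∈ univ.filter (fun γ : F => γ ≠ 0), f (a * (γ + γ⁻¹)) := by
  refine sum_nbij' (fun α => a⁻¹ * α) (fun γ => a * γ) ?_ ?_ ?_ ?_ ?_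
  · intro α hα
    simp_all
  · intro γ hγ
    simp_all
  · intro α _
    simp [ha]
  · intro γ _
    simp [ha]
  · intro α hα
    have hα0 : α ≠ 0 := (mem_filter.1 hα).2
    congr 1
    field_simp

lemma sum_piFinset_nonzero_ite_sub_one {F R : Type*} [Field F] [Fintype F] [DecidableEq F]
    [CommRing R] (m : ℕ) (P : (Fin m → F) → Prop) [DecidablePred P] (c : R) :
    ∑ v ∈ Fintype.piFinset (fun _ : Fin m => univ.filter (fun α : F => α ≠ 0)),
        ((if P v then c else 0) - 1)
      = c * (Nat.card {v : Fin m → F // (∀ i, v i ≠ 0) ∧ P v} : R)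
        - ((Fintype.card F : R) - 1) ^ m := by
  rw [sum_sub_distrib, ← sum_filter, sum_const, sum_const, nsmul_eq_mul, nsmul_one, mul_comm,
    Nat.card_eq_fintype_card, Fintype.card_subtype, Fintype.card_piFinset_const, filter_ne',
    card_erase_of_mem (mem_univ 0), card_univ, Nat.cast_pow, Nat.cast_sub Fintype.card_pos,
    Nat.cast_one]
  congr 4
  ext v
  simp [Fintype.mem_piFinset]

theorem stmt5 {F : Type*} [Field F] [Fintype F] [DecidableEq F]
    (ψ : AddChar F ℂ) (hψ : ψ ≠ 1) (m : ℕ) (β : F) :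
    ∑ a ∈ Finset.univ.filter (fun a : F => a ≠ 0),
        ψ (-(a * β)) * (∑ α ∈ Finset.univ.filter (fun α : F => α ≠ 0), ψ (α + a ^ 2 * α⁻¹)) ^ m
      = (Fintype.card F : ℂ) *
          (Nat.card {v : Fin m → F // (∀ i, v i ≠ 0) ∧ ∑ i, (v i + (v i)⁻¹) = β} : ℂ)
        - ((Fintype.card F : ℂ) - 1) ^ m := by
  calc _ = ∑ a ∈ univ.filter (fun a : F => a ≠ 0),
          ∑ v ∈ Fintype.piFinset (fun _ : Fin m => univ.filter (fun α : F => α ≠ 0)),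
            ψ (a * (∑ i, (v i + (v i)⁻¹) - β)) := by
        refine sum_congr rfl fun a ha => ?_
        rw [sum_nonzero_add_sq_mul_inv _ (mem_filter.1 ha).2, ψ.sum_pow_eq_sum_piFinset, mul_sum]
        refine sum_congr rfl fun v _ => ?_
        rw [← ψ.map_add_eq_mul, ← mul_sum]
        congr 1
        ring
    _ = ∑ v ∈ Fintype.piFinset (fun _ : Fin m => univ.filter (fun α : F => α ≠ 0)),
          ((if ∑ i, (v i + (v i)⁻¹) = β then (Fintype.card F : ℂ) else 0) - 1) := by
        rw [sum_comm]
        refine sum_congr rfl fun v _ => ?_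
        simp only [AddChar.sum_nonzero_mul_eq_ite hψ, sub_eq_zero]
    _ = _ := sum_piFinset_nonzero_ite_sub_one m _ _
end

section
/- Let q be a power of an odd prime, ε ∈ F_q* a nonsquare, and ψ a nontrivial additive character of F_q. Then Σ_{w ∈ SO⁻(2,q)} ψ(Tr w) = -K(ψ;1), where K(ψ;1) = Σ_{α ∈ F_q*} ψ(α + α⁻¹). -/
/-!
Both sides are grouped by `a = Tr w / 2 = (α + α⁻¹) / 2`. With `χ` the quadratic character,
the fibre over `a` has `1 + χ((a² - 1) / ε) = 1 - χ(a² - 1)` elements on the left, and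
`1 + χ(a² - 1)` on the right, since `α + α⁻¹ = 2a` means `(α - a)² = a² - 1`. The two counts
add up to the constant `2`, and `∑ₐ ψ(2a) = 0` because `ψ` is nontrivial.
-/

open Finset

lemma sum_filter_prod_eq_sum_card_nsmul {α β M : Type*} [Fintype α] [Fintype β]
    [AddCommMonoid M] (P : α → β → Prop) [∀ a b, Decidable (P a b)] (f : α → M) :
    ∑ p ∈ ({p : α × β | P p.1 p.2} : Finset (α × β)), f p.1
      = ∑ a, #{b | P a b} • f a := by
  simp only [sum_filter, Fintype.sum_prod_type, ← sum_const]

section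

variable {F : Type*} [Field F] [Fintype F] [DecidableEq F]

lemma card_sub_mul_sq_eq_one (hF : ringChar F ≠ 2) {ε : F} (hε : ¬IsSquare ε) (a : F) :
    (#{b : F | a ^ 2 - ε * b ^ 2 = 1} : ℤ) = 1 - quadraticChar F (a ^ 2 - 1) := by
  have hε0 : ε ≠ 0 := by rintro rfl; exact hε ⟨0, by simp⟩
  have hsqrts : univ.filter (fun b : F => a ^ 2 - ε * b ^ 2 = 1)
      = univ.filter (fun b => b ^ 2 = (a ^ 2 - 1) * ε⁻¹) := by
    ext b
    simp only [mem_filter_univ]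
    constructor <;> intro h <;> field_simp at h ⊢ <;> linear_combination -h
  rw [hsqrts, ← Set.toFinset_ofPred, quadraticChar_card_sqrts hF, map_mul,
    quadraticChar_neg_one_iff_not_isSquare.mpr (isSquare_inv.not.mpr hε)]
  ring

lemma card_half_add_inv_eq (hF : ringChar F ≠ 2) (a : F) :
    (#{x : F | x ≠ 0 ∧ (x + x⁻¹) / 2 = a} : ℤ) = 1 + quadraticChar F (a ^ 2 - 1) := by
  have h2 : (2 : F) ≠ 0 := Ring.two_ne_zero hF
  have hroots : univ.filter (fun x : F => x ≠ 0 ∧ (x + x⁻¹) / 2 = a)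
      = (univ.filter fun y : F => y ^ 2 = a ^ 2 - 1).image (· + a) := by
    ext x
    simp only [mem_filter_univ, mem_image]
    constructor
    · rintro ⟨hx, h⟩
      refine ⟨x - a, ?_, by ring⟩
      field_simp at h
      linear_combination h
    · rintro ⟨y, hy, rfl⟩
      have hx : y + a ≠ 0 := by
        intro h
        rw [eq_neg_of_add_eq_zero_left h] at hy
        exact one_ne_zero (by linear_combination hy : (1 : F) = 0)
      refine ⟨hx, ?_⟩
      field_simp
      linear_combination hy
  rw [hroots, card_image_of_injective _ (add_left_injective a), ← Set.toFinset_ofPred,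
    quadraticChar_card_sqrts hF]
  ring

lemma card_sub_mul_sq_eq_one_add_card_half_add_inv_eq (hF : ringChar F ≠ 2) {ε : F}
    (hε : ¬IsSquare ε) (a : F) :
    #{b : F | a ^ 2 - ε * b ^ 2 = 1} + #{x : F | x ≠ 0 ∧ (x + x⁻¹) / 2 = a} = 2 := by
  zify
  rw [card_sub_mul_sq_eq_one hF hε a, card_half_add_inv_eq hF a]
  ring

lemma sum_ne_zero_comp_add_inv (hF : ringChar F ≠ 2) {M : Type*} [AddCommMonoid M]
    (f : F → M) :
    ∑ x ∈ {x : F | x ≠ 0}, f (x + x⁻¹)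
      = ∑ a, #{x : F | x ≠ 0 ∧ (x + x⁻¹) / 2 = a} • f (2 * a) := by
  have h2 : (2 : F) ≠ 0 := Ring.two_ne_zero hF
  have hf : ∀ x : F, f (x + x⁻¹) = f (2 * ((x + x⁻¹) / 2)) := fun x => by
    rw [mul_div_cancel₀ _ h2]
  rw [sum_congr rfl fun x _ => hf x,
    ← sum_fiberwise' _ (fun x : F => (x + x⁻¹) / 2) (fun a => f (2 * a))]
  simp only [sum_const, filter_filter]

end

theorem stmt7 {F : Type*} [Field F] [Fintype F] [DecidableEq F] (hchar : ringChar F ≠ 2)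
    (ε : F) (hε : ¬ IsSquare ε) (ψ : AddChar F ℂ) (hψ : ψ ≠ 1)
    (S : Set (Matrix (Fin 2) (Fin 2) F))
    (hS : S = {M | ∃ a b : F, a ^ 2 - ε * b ^ 2 = 1 ∧ M = !![a, b * ε; b, a]}) :
    ∑ w ∈ (Set.toFinite S).toFinset, ψ w.trace
      = -(∑ α ∈ Finset.univ.filter (fun α : F => α ≠ 0), ψ (α + α⁻¹)) := by
  have hS_image : (Set.toFinite S).toFinset
      = (univ.filter fun p : F × F => p.1 ^ 2 - ε * p.2 ^ 2 = 1).image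
        (fun p => !![p.1, p.2 * ε; p.2, p.1]) := by
    ext M
    simp [hS, eq_comm]
  have hinj : Function.Injective (fun p : F × F => !![p.1, p.2 * ε; p.2, p.1]) := by
    intro p q h
    exact Prod.ext (congrFun₂ h 0 0) (congrFun₂ h 1 0)
  have hψ_sum : ∑ a : F, ψ (2 * a) = 0 := by
    simpa using AddChar.sum_eq_zero_of_ne_one
      (AddChar.IsPrimitive.of_ne_one hψ (Ring.two_ne_zero hchar))
  rw [hS_image, sum_image hinj.injOn]
  simp only [Matrix.trace_fin_two_of, ← two_mul]
  rw [sum_filter_prod_eq_sum_card_nsmul (fun a b => a ^ 2 - ε * b ^ 2 = 1) (fun a => ψ (2 * a)),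
    sum_ne_zero_comp_add_inv hchar, eq_neg_iff_add_eq_zero, ← sum_add_distrib]
  simp only [← add_nsmul, card_sub_mul_sq_eq_one_add_card_half_add_inv_eq hchar hε, ← smul_sum,
    hψ_sum, smul_zero]
end

section
/- Let q be a power of an odd prime, ε ∈ F_q* a nonsquare, and ψ a nontrivial additive character of F_q. Define O⁻(2,q) = {i ∈ GL(2,q) : ᵗi δ_ε i = δ_ε} where δ_ε = [[1,0],[0,-ε]]. Then Σ_{w ∈ O⁻(2,q)} ψ(Tr w) = -K(ψ;1) + q + 1. -/
/-!
Every `M ∈ O⁻(2,q)` is `!![a, s ε c; c, s a]` with `a² - ε c² = 1` and `s = det M = ±1`, so the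
sum equals `∑_{a² - ε c² = 1} (ψ(2a) + 1)`. For fixed `a`, the solutions `c` of `ε c² = a² - 1`
and the `α ≠ 0` with `(α + α⁻¹)/2 = a`, i.e. `(α - a)² = a² - 1`, number 2 in total, because `ε`
is a nonsquare. Weighting by `ψ(2a)` gives `∑_{a² - ε c² = 1} ψ(2a) + K(ψ;1) = 2 ∑_a ψ(2a) = 0`,
and weighting by `1` shows that the conic has `q + 1` points.
-/

open Finset

theorem Finset.sum_comp_eq_sum_card_filter_nsmul {ι κ β : Type*} [Fintype κ] [DecidableEq κ]
    [AddCommMonoid β] (s : Finset ι) (g : ι → κ) (h : κ → β) :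
    ∑ x ∈ s, h (g x) = ∑ y, #{x ∈ s | g x = y} • h y := by
  simp_rw [← sum_fiberwise' s g h, sum_const]

theorem Finset.card_filter_fst_eq {α γ : Type*} [Fintype α] [Fintype γ] [DecidableEq α]
    (P : α × γ → Prop) [DecidablePred P] (a : α) :
    #{p ∈ ({p | P p} : Finset (α × γ)) | p.1 = a} = #{c | P (a, c)} := by
  refine card_nbij' Prod.snd (fun c => (a, c)) (fun p hp => ?_) (fun c hc => ?_)
    (fun p hp => ?_) (fun _ _ => rfl)
  · simp only [coe_filter, mem_filter, mem_univ, true_and, Set.mem_ofPred_eq] at hp ⊢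
    exact hp.2 ▸ hp.1
  · simpa using hc
  · simp only [coe_filter, mem_filter, mem_univ, true_and, Set.mem_ofPred_eq] at hp
    exact Prod.ext hp.2.symm rfl

section Conic

variable {F : Type*} [Field F] [Fintype F] [DecidableEq F]

theorem card_sq_eq_add_card_mul_sq_eq (hF : ringChar F ≠ 2) {ε : F}
    (hε : ¬IsSquare ε) (u : F) :
    #{x | x ^ 2 = u} + #{x | ε * x ^ 2 = u} = 2 := by
  have hε0 : ε ≠ 0 := by rintro rfl; exact hε ⟨0, by ring⟩
  have hdiv : #{x | ε * x ^ 2 = u} = #{x | x ^ 2 = u / ε} := by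
    congr 1; ext x; simp only [mem_filter, mem_univ, true_and]; rw [eq_div_iff hε0, mul_comm]
  have hχ : quadraticChar F (u / ε) = -quadraticChar F u := by
    rw [show u / ε = u * ε * ε⁻¹ ^ 2 by field_simp, map_mul, map_mul,
      quadraticChar_sq_one' (inv_ne_zero hε0), quadraticChar_neg_one_iff_not_isSquare.mpr hε]
    ring
  have hcard (v : F) : (#{x | x ^ 2 = v} : ℤ) = quadraticChar F v + 1 := by
    simpa only [Set.toFinset_ofPred] using quadraticChar_card_sqrts hF v
  zify
  rw [hdiv, hcard, hcard, hχ]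
  ring

theorem card_sq_sub_mul_sq_eq_one_eq_card_mul_sq_eq (ε a : F) :
    #{c | a ^ 2 - ε * c ^ 2 = 1} = #{c | ε * c ^ 2 = a ^ 2 - 1} := by
  congr 1; ext c; simp only [mem_filter, mem_univ, true_and]
  constructor <;> intro h <;> linear_combination -h

theorem card_inv_add_div_two_eq_card_sq_eq (hF : ringChar F ≠ 2) (a : F) :
    #{α ∈ ({α | α ≠ 0} : Finset F) | (α + α⁻¹) / 2 = a} = #{x | x ^ 2 = a ^ 2 - 1} := by
  have h2 : (2 : F) ≠ 0 := Ring.two_ne_zero hF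
  refine card_nbij' (· - a) (· + a) (fun α hα => ?_) (fun x hx => ?_) (fun α _ => by ring)
    (fun x _ => by ring)
  · simp only [coe_filter, mem_filter, mem_univ, true_and, Set.mem_ofPred_eq] at hα ⊢
    obtain ⟨hα0, hα⟩ := hα
    rw [← hα]; field_simp; ring
  · simp only [coe_filter, mem_filter, mem_univ, true_and, Set.mem_ofPred_eq] at hx ⊢
    have hx0 : x + a ≠ 0 := by
      intro h0; exact one_ne_zero (by linear_combination hx - (x - a) * h0)
    refine ⟨hx0, ?_⟩
    field_simp; linear_combination hx

theorem sum_norm_one_add_sum_inv_add_div_two {β : Type*} [AddCommMonoid β] (hF : ringChar F ≠ 2)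
    {ε : F} (hε : ¬IsSquare ε) (h : F → β) :
    ∑ p ∈ ({p | p.1 ^ 2 - ε * p.2 ^ 2 = 1} : Finset (F × F)), h p.1
      + ∑ α ∈ ({α | α ≠ 0} : Finset F), h ((α + α⁻¹) / 2) = 2 • ∑ a, h a := by
  rw [sum_comp_eq_sum_card_filter_nsmul, sum_comp_eq_sum_card_filter_nsmul, ← sum_add_distrib,
    smul_sum]
  refine sum_congr rfl fun a _ => ?_
  rw [← add_nsmul, card_filter_fst_eq, card_inv_add_div_two_eq_card_sq_eq hF,
    card_sq_sub_mul_sq_eq_one_eq_card_mul_sq_eq, add_comm, card_sq_eq_add_card_mul_sq_eq hF hε]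

theorem card_sq_sub_mul_sq_eq_one (hF : ringChar F ≠ 2) {ε : F} (hε : ¬IsSquare ε) :
    #({p | p.1 ^ 2 - ε * p.2 ^ 2 = 1} : Finset (F × F)) = Fintype.card F + 1 := by
  have h := sum_norm_one_add_sum_inv_add_div_two hF hε fun _ => 1
  simp only [sum_const, smul_eq_mul, mul_one, filter_ne', card_erase_of_mem (mem_univ _),
    card_univ] at h
  have : 0 < Fintype.card F := Fintype.card_pos
  omega

end Conic

section Orthogonal

variable {F : Type*} [Field F]

theorem transpose_mul_diag_mul_fin_two_eq_iff (ε a b c d : F) :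
    (!![a, b; c, d]).transpose * !![1, 0; 0, -ε] * !![a, b; c, d] = !![1, 0; 0, -ε] ↔
      a ^ 2 - ε * c ^ 2 = 1 ∧ a * b - ε * (c * d) = 0 ∧ b ^ 2 - ε * d ^ 2 = -ε := by
  simp only [← Matrix.ext_iff, Fin.forall_fin_two]
  simp only [Fin.isValue, Matrix.mul_apply, Matrix.transpose_apply, Matrix.of_apply,
    Matrix.cons_val', Matrix.cons_val_zero, Matrix.cons_val_fin_one, Fin.sum_univ_two,
    Matrix.cons_val_one, mul_one, mul_zero, add_zero, mul_neg, zero_add, neg_mul]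
  constructor
  · rintro ⟨⟨h₀₀, h₀₁⟩, -, h₁₁⟩
    exact ⟨by linear_combination h₀₀, by linear_combination h₀₁, by linear_combination h₁₁⟩
  · rintro ⟨h₀₀, h₀₁, h₁₁⟩
    exact ⟨⟨by linear_combination h₀₀, by linear_combination h₀₁⟩, by linear_combination h₀₁,
      by linear_combination h₁₁⟩

/-- `((a, c), s) ↦ !![a, ε c; c, a] * diag(1, s)`. -/
def orthogonalParam (ε : F) (x : (F × F) × F) : Matrix (Fin 2) (Fin 2) F :=
  !![x.1.1, x.2 * ε * x.1.2; x.1.2, x.2 * x.1.1]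

theorem det_orthogonalParam (ε a c s : F) :
    (orthogonalParam ε ((a, c), s)).det = s * (a ^ 2 - ε * c ^ 2) := by
  rw [orthogonalParam, Matrix.det_fin_two_of]; ring

theorem trace_orthogonalParam (ε : F) (x : (F × F) × F) :
    (orthogonalParam ε x).trace = x.1.1 + x.2 * x.1.1 :=
  Matrix.trace_fin_two_of _ _ _ _

/-- The second column of an element of `O⁻(2)` is `det M` times the `δ_ε`-orthogonal
`(ε c, a)` of its first column `(a, c)`. -/
theorem eq_orthogonalParam_of_transpose_mul_mul_eq {ε : F} (hε : ε ≠ 0)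
    {M : Matrix (Fin 2) (Fin 2) F}
    (hM : M.transpose * !![1, 0; 0, -ε] * M = !![1, 0; 0, -ε]) :
    M 0 0 ^ 2 - ε * M 1 0 ^ 2 = 1 ∧ M.det ^ 2 = 1 ∧
      M = orthogonalParam ε ((M 0 0, M 1 0), M.det) := by
  rw [M.eta_fin_two, transpose_mul_diag_mul_fin_two_eq_iff] at hM
  obtain ⟨h₀₀, h₀₁, h₁₁⟩ := hM
  refine ⟨h₀₀, ?_, ?_⟩
  · rw [Matrix.det_fin_two]
    refine mul_right_injective₀ (neg_ne_zero.mpr hε) ?_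
    linear_combination (M 0 1 ^ 2 - ε * M 1 1 ^ 2) * h₀₀ + h₁₁
      - (M 0 0 * M 0 1 - ε * (M 1 0 * M 1 1)) * h₀₁
  · have hb : M 0 1 = M.det * ε * M 1 0 := by
      rw [Matrix.det_fin_two]; linear_combination (-M 0 1) * h₀₀ + M 0 0 * h₀₁
    have hd : M 1 1 = M.det * M 0 0 := by
      rw [Matrix.det_fin_two]; linear_combination (-M 1 1) * h₀₀ + M 1 0 * h₀₁
    exact M.eta_fin_two.trans (by rw [hb, hd]; rfl)

theorem orthogonalParam_mem {ε a c s : F} (hac : a ^ 2 - ε * c ^ 2 = 1) (hs : s ^ 2 = 1) :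
    IsUnit (orthogonalParam ε ((a, c), s)) ∧
      (orthogonalParam ε ((a, c), s)).transpose * !![1, 0; 0, -ε] * orthogonalParam ε ((a, c), s)
        = !![1, 0; 0, -ε] := by
  refine ⟨?_, ?_⟩
  · rw [Matrix.isUnit_iff_isUnit_det, det_orthogonalParam, hac, mul_one, isUnit_iff_ne_zero]
    rintro rfl; simp at hs
  · rw [orthogonalParam, transpose_mul_diag_mul_fin_two_eq_iff]
    exact ⟨hac, by ring, by linear_combination (-ε * s ^ 2) * hac - ε * hs⟩

theorem sum_orthogonal_eq_sum_orthogonalParam {β : Type*} [AddCommMonoid β] [DecidableEq F]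
    [Fintype F] {ε : F} (hε : ε ≠ 0)
    (hfin : {M : Matrix (Fin 2) (Fin 2) F |
      IsUnit M ∧ M.transpose * !![1, 0; 0, -ε] * M = !![1, 0; 0, -ε]}.Finite)
    (f : Matrix (Fin 2) (Fin 2) F → β) :
    ∑ M ∈ hfin.toFinset, f M
      = ∑ x ∈ ({p | p.1 ^ 2 - ε * p.2 ^ 2 = 1} : Finset (F × F)) ×ˢ {1, -1},
          f (orthogonalParam ε x) := by
  symm
  refine sum_nbij' (orthogonalParam ε) (fun M => ((M 0 0, M 1 0), M.det)) ?_ ?_ ?_ ?_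
    (fun _ _ => rfl)
  · rintro ⟨⟨a, c⟩, s⟩ hx
    simp only [mem_product, mem_filter, mem_univ, true_and, mem_insert, mem_singleton] at hx
    simpa using orthogonalParam_mem hx.1 (sq_eq_one_iff.mpr hx.2)
  · intro M hM
    obtain ⟨h₀₀, hdet, -⟩ :=
      eq_orthogonalParam_of_transpose_mul_mul_eq hε (hfin.mem_toFinset.mp hM).2
    simpa [h₀₀] using hdet
  · rintro ⟨⟨a, c⟩, s⟩ hx
    simp only [mem_product, mem_filter, mem_univ, true_and] at hx
    rw [det_orthogonalParam, hx.1, mul_one]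
    rfl
  · intro M hM
    exact (eq_orthogonalParam_of_transpose_mul_mul_eq hε (hfin.mem_toFinset.mp hM).2).2.2.symm

end Orthogonal

theorem stmt9 {F : Type*} [Field F] [Fintype F] [DecidableEq F] (hchar : ringChar F ≠ 2)
    (ε : F) (hε : ¬ IsSquare ε) (ψ : AddChar F ℂ) (hψ : ψ ≠ 1)
    (O : Set (Matrix (Fin 2) (Fin 2) F))
    (hO : O = {M | IsUnit M ∧ M.transpose * !![1, 0; 0, -ε] * M = !![1, 0; 0, -ε]}) :
    ∑ w ∈ (Set.toFinite O).toFinset, ψ w.trace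
      = -(∑ α ∈ Finset.univ.filter (fun α : F => α ≠ 0), ψ (α + α⁻¹))
        + (Fintype.card F : ℂ) + 1 := by
  subst hO
  have hε0 : ε ≠ 0 := by rintro rfl; exact hε ⟨0, by ring⟩
  have h2 : (2 : F) ≠ 0 := Ring.two_ne_zero hchar
  have hdouble : ∑ a : F, ψ (2 * a) = 0 :=
    (Equiv.sum_comp (Equiv.mulLeft₀ 2 h2) ψ).trans (AddChar.sum_eq_zero_iff_ne_zero.mpr hψ)
  have hcancel := sum_norm_one_add_sum_inv_add_div_two hchar hε fun a => ψ (2 * a)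
  simp only [mul_div_cancel₀ _ h2, hdouble, smul_zero] at hcancel
  rw [sum_orthogonal_eq_sum_orthogonalParam hε0, sum_product]
  simp only [trace_orthogonalParam]
  rw [sum_congr rfl fun p _ => sum_pair (Ring.neg_one_ne_one_of_char_ne_two hchar).symm]
  simp only [one_mul, neg_one_mul, add_neg_cancel, AddChar.map_zero_eq_one, ← two_mul]
  rw [sum_add_distrib, eq_neg_of_add_eq_zero_left hcancel, sum_const,
    card_sq_sub_mul_sq_eq_one hchar hε]
  ring
end

section
/- For integers t ≥ 2 and a ∈ F_q*, with ψ a nontrivial additive character of F_q, the Kloosterman sum for GL(t,q), defined by K_{GL(t,q)}(ψ;a) = Σ_{w ∈ GL(t,q)} ψ(Tr w + a·Tr w⁻¹), satisfies the case t = 2 identity: K_{GL(2,q)}(ψ;a) = q·K(ψ;a)² + q²(q-1), where K(ψ;a) = K_{GL(1,q)}(ψ;a) = Σ_{α∈F_q*} ψ(α + aα⁻¹). -/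
/-!
Write `w = !![α, β; γ, δ]`, so that `Tr w + a Tr w⁻¹ = (α + δ)(1 + a / D)` with `D = αδ - βγ`,
and split the sum according to `γ`. For `γ = 0` the summand does not depend on `β` and factors
as the product of the `GL(1)` summands at `α` and `δ`, giving `q K(ψ;a)²`. For `γ ≠ 0` the map
`β ↦ αδ - βγ` is a bijection, so `D` runs over `F` independently of `α, δ`; orthogonality of `ψ`
in `α` and `δ` kills every `D` except the one with `1 + a / D = 0`, i.e. `D = -a`, which
contributes `q²`. The `q - 1` values of `γ ≠ 0` give `q²(q - 1)`.
-/

open Finset Matrix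

namespace Matrix

variable {K : Type*} [Field K]

theorem trace_inv_fin_two (m : Matrix (Fin 2) (Fin 2) K) : m⁻¹.trace = m.det⁻¹ * m.trace := by
  rw [inv_def, trace_smul, adjugate_fin_two, trace_fin_two_of, Ring.inverse_eq_inv', smul_eq_mul,
    trace_fin_two, add_comm (m 1 1)]

theorem trace_add_mul_trace_inv_fin_two (a : K) (m : Matrix (Fin 2) (Fin 2) K) :
    m.trace + a * m⁻¹.trace = m.trace * (1 + a * m.det⁻¹) := by
  rw [trace_inv_fin_two]
  ring

theorem sum_fin_two {R M : Type*} [Fintype R] [AddCommMonoid M]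
    (g : Matrix (Fin 2) (Fin 2) R → M) :
    ∑ m, g m = ∑ α, ∑ β, ∑ γ, ∑ δ, g !![α, β; γ, δ] := by
  let e : R × R × R × R ≃ Matrix (Fin 2) (Fin 2) R :=
    { toFun := fun p => !![p.1, p.2.1; p.2.2.1, p.2.2.2]
      invFun := fun m => (m 0 0, m 0 1, m 1 0, m 1 1)
      left_inv := fun p => by simp
      right_inv := fun m => (eta_fin_two m).symm }
  simp only [← e.sum_comp, Fintype.sum_prod_type]
  rfl

theorem GeneralLinearGroup.sum_eq_sum_det_ne_zero {n M : Type*} [Fintype n] [DecidableEq n]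
    [Fintype K] [DecidableEq K] [AddCommMonoid M] (f : Matrix n n K → M) :
    ∑ w : GL n K, f w = ∑ m, if m.det = 0 then 0 else f m := by
  rw [sum_ite, sum_const_zero, zero_add]
  refine sum_bij (fun w _ => (w : Matrix n n K)) (fun w _ => ?_) (fun _ _ _ _ h => Units.ext h)
    (fun m hm => ⟨mkOfDetNeZero m (mem_filter.mp hm).2, mem_univ _, rfl⟩) (fun _ _ => rfl)
  exact mem_filter.mpr ⟨mem_univ _, ((isUnit_iff_isUnit_det _).mp w.isUnit).ne_zero⟩

end Matrix

namespace AddChar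

variable {F : Type*} [Field F] [Fintype F] [DecidableEq F]

theorem sum_sum_map_add_mul {ψ : AddChar F ℂ} (hψ : ψ.IsPrimitive) (c : F) :
    ∑ α, ∑ δ, ψ ((α + δ) * c) = if c = 0 then (Fintype.card F : ℂ) ^ 2 else 0 := by
  simp only [add_mul, map_add_eq_mul, ← sum_mul_sum, sum_mulShift c hψ]
  split_ifs <;> ring

end AddChar

section Kloosterman

variable {F : Type*} [Field F] [DecidableEq F] (ψ : AddChar F ℂ) (a : F)

/-- The summand of the `GL(2)` Kloosterman sum at a matrix of trace `s` and determinant `D`,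
extended by `0` to singular matrices. -/
def glTwoKloostermanTerm (s D : F) : ℂ :=
  if D = 0 then 0 else ψ (s * (1 + a * D⁻¹))

def kloostermanTerm (α : F) : ℂ :=
  if α = 0 then 0 else ψ (α + a * α⁻¹)

theorem glTwoKloostermanTerm_add_mul (α δ : F) :
    glTwoKloostermanTerm ψ a (α + δ) (α * δ) = kloostermanTerm ψ a α * kloostermanTerm ψ a δ := by
  rcases eq_or_ne α 0 with rfl | hα
  · simp [glTwoKloostermanTerm, kloostermanTerm]
  rcases eq_or_ne δ 0 with rfl | hδ
  · simp [glTwoKloostermanTerm, kloostermanTerm]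
  simp only [glTwoKloostermanTerm, kloostermanTerm, mul_ne_zero hα hδ, hα, hδ, if_false,
    ← AddChar.map_add_eq_mul]
  congr 1
  field_simp
  ring

variable [Fintype F]

theorem sum_sum_sum_glTwoKloostermanTerm_zero :
    ∑ α, ∑ δ, ∑ β, glTwoKloostermanTerm ψ a (α + δ) (α * δ - β * 0)
      = (Fintype.card F : ℂ) * (∑ α, kloostermanTerm ψ a α) ^ 2 := by
  simp only [mul_zero, sub_zero, sum_const, card_univ, nsmul_eq_mul, glTwoKloostermanTerm_add_mul,
    ← mul_sum, sum_mul_sum, sq]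

theorem sum_sum_glTwoKloostermanTerm_add {ψ : AddChar F ℂ} (hψ : ψ.IsPrimitive) {a D : F}
    (ha : a ≠ 0) :
    ∑ α, ∑ δ, glTwoKloostermanTerm ψ a (α + δ) D
      = if D = -a then (Fintype.card F : ℂ) ^ 2 else 0 := by
  rcases eq_or_ne D 0 with rfl | hD
  · simp [glTwoKloostermanTerm, ha]
  have hc : 1 + a * D⁻¹ = 0 ↔ D = -a := by
    rw [← mul_right_inj' hD, mul_zero, mul_add, mul_one, mul_left_comm, mul_inv_cancel₀ hD, mul_one,
      add_eq_zero_iff_eq_neg]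
  simp only [glTwoKloostermanTerm, hD, if_false, AddChar.sum_sum_map_add_mul hψ, hc]

theorem sum_sum_sum_glTwoKloostermanTerm_of_ne_zero {ψ : AddChar F ℂ} (hψ : ψ.IsPrimitive)
    {a γ : F} (ha : a ≠ 0) (hγ : γ ≠ 0) :
    ∑ α, ∑ δ, ∑ β, glTwoKloostermanTerm ψ a (α + δ) (α * δ - β * γ)
      = (Fintype.card F : ℂ) ^ 2 := by
  have hdet (α δ : F) : ∑ β, glTwoKloostermanTerm ψ a (α + δ) (α * δ - β * γ)
      = ∑ D, glTwoKloostermanTerm ψ a (α + δ) D :=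
    ((Equiv.mulRight₀ γ hγ).trans (Equiv.subLeft (α * δ))).sum_comp _
  calc ∑ α, ∑ δ, ∑ β, glTwoKloostermanTerm ψ a (α + δ) (α * δ - β * γ)
      = ∑ α, ∑ D, ∑ δ, glTwoKloostermanTerm ψ a (α + δ) D := by
        simp only [hdet]
        exact sum_congr rfl fun _ _ => sum_comm
    _ = ∑ D, if D = -a then (Fintype.card F : ℂ) ^ 2 else 0 := by
        rw [sum_comm]
        exact sum_congr rfl fun D _ => sum_sum_glTwoKloostermanTerm_add hψ ha
    _ = (Fintype.card F : ℂ) ^ 2 := by simp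

theorem sum_glTwoKloostermanTerm_trace_det (ψ : AddChar F ℂ) (a : F) :
    ∑ m : Matrix (Fin 2) (Fin 2) F, glTwoKloostermanTerm ψ a m.trace m.det
      = ∑ γ, ∑ α, ∑ δ, ∑ β, glTwoKloostermanTerm ψ a (α + δ) (α * δ - β * γ) := by
  simp only [sum_fin_two, trace_fin_two_of, det_fin_two_of]
  calc ∑ α, ∑ β, ∑ γ, ∑ δ, glTwoKloostermanTerm ψ a (α + δ) (α * δ - β * γ)
      = ∑ α, ∑ γ, ∑ δ, ∑ β, glTwoKloostermanTerm ψ a (α + δ) (α * δ - β * γ) :=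
        sum_congr rfl fun _ _ => sum_comm.trans (sum_congr rfl fun _ _ => sum_comm)
    _ = _ := sum_comm

theorem sum_glTwoKloostermanTerm {ψ : AddChar F ℂ} (hψ : ψ.IsPrimitive) {a : F} (ha : a ≠ 0) :
    ∑ m : Matrix (Fin 2) (Fin 2) F, glTwoKloostermanTerm ψ a m.trace m.det
      = (Fintype.card F : ℂ) * (∑ α, kloostermanTerm ψ a α) ^ 2
        + (Fintype.card F : ℂ) ^ 2 * ((Fintype.card F : ℂ) - 1) := by
  rw [sum_glTwoKloostermanTerm_trace_det, ← add_sum_erase _ _ (mem_univ 0),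
    sum_sum_sum_glTwoKloostermanTerm_zero,
    sum_congr rfl fun γ hγ =>
      sum_sum_sum_glTwoKloostermanTerm_of_ne_zero hψ ha (ne_of_mem_erase hγ),
    sum_const, card_erase_of_mem (mem_univ _), card_univ, nsmul_eq_mul,
    Nat.cast_pred Fintype.card_pos]
  ring

theorem sum_generalLinearGroup_fin_two_eq_sum_glTwoKloostermanTerm (ψ : AddChar F ℂ) (a : F) :
    ∑ w : GL (Fin 2) F,
        ψ ((w : Matrix (Fin 2) (Fin 2) F).trace + a * ((↑(w⁻¹) : Matrix (Fin 2) (Fin 2) F)).trace)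
      = ∑ m : Matrix (Fin 2) (Fin 2) F, glTwoKloostermanTerm ψ a m.trace m.det := by
  simp only [coe_units_inv]
  rw [GeneralLinearGroup.sum_eq_sum_det_ne_zero fun m => ψ (m.trace + a * m⁻¹.trace)]
  simp only [trace_add_mul_trace_inv_fin_two, glTwoKloostermanTerm]

end Kloosterman

theorem stmt11 {F : Type*} [Field F] [Fintype F] [DecidableEq F]
    (ψ : AddChar F ℂ) (hψ : ψ ≠ 1) (a : F) (ha : a ≠ 0) :
    ∑ w : GL (Fin 2) F,
        ψ ((w : Matrix (Fin 2) (Fin 2) F).trace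
          + a * ((↑(w⁻¹) : Matrix (Fin 2) (Fin 2) F)).trace)
      = (Fintype.card F : ℂ) *
          (∑ α ∈ Finset.univ.filter (fun α : F => α ≠ 0), ψ (α + a * α⁻¹)) ^ 2
        + (Fintype.card F : ℂ) ^ 2 * ((Fintype.card F : ℂ) - 1) := by
  have hK : ∑ α ∈ univ.filter (fun α : F => α ≠ 0), ψ (α + a * α⁻¹)
      = ∑ α, kloostermanTerm ψ a α := by
    rw [sum_filter]
    simp only [kloostermanTerm, ite_not]
  rw [sum_generalLinearGroup_fin_two_eq_sum_glTwoKloostermanTerm, hK,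
    sum_glTwoKloostermanTerm (AddChar.IsPrimitive.of_ne_one hψ) ha]
end
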